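/- Let α, β be real numbers. (a) For n = 2: the equation F₂(α, β, t) = 0 has exactly one solution t > 0, namely t = (α + β)/2, if α + β > 0, and no solution t > 0 if α + β ≤ 0. (b) For n ≥ 3: if α ≤ 0 and β ≤ 0, the equation F_n(α, β, t) = 0 has no solution t > 0; if β > 0, it has exactly one solution t > 0; if α > 0 and β = 0, it has exactly one solution t > 0, namely t = α·n/(n+2). -/

import Mathlib

/-- `FF n α β t = (n/2 + 1) t^{n/2} − α (n/2) t^{n/2−1} − β`, with real powers of
the positive real `t`. -/
noncomputable def FF (n : ℕ) (α β t : ℝ) : ℝ :=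
  ((n : ℝ) / 2 + 1) * t ^ ((n : ℝ) / 2) - α * ((n : ℝ) / 2) * t ^ ((n : ℝ) / 2 - 1) - β

lemma FF_factor (n : ℕ) (α β t : ℝ) (ht : 0 < t) :
    FF n α β t = t ^ ((n : ℝ) / 2 - 1) * (((n : ℝ) / 2 + 1) * t - α * ((n : ℝ) / 2)) - β := by
  unfold FF
  have h : t ^ ((n : ℝ) / 2) = t ^ ((n : ℝ) / 2 - 1) * t := by
    rw [← Real.rpow_add_one ht.ne' ((n : ℝ) / 2 - 1)]
    ring_nf
  rw [h]; ring

/-- **Positive zeros of `F_n` (Lemma solf, remaining cases).**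
(a) For `n = 2`: exactly one zero `t > 0`, namely `t = (α+β)/2`, if `α + β > 0`, and
none if `α + β ≤ 0`. (b) For `n ≥ 3`: none if `α ≤ 0` and `β ≤ 0`; exactly one if
`β > 0`; exactly one, namely `t = α n/(n+2)`, if `α > 0` and `β = 0`. -/
theorem Fn_positive_zeros_basic_cases (n : ℕ) (α β : ℝ) :
    (n = 2 →
      (0 < α + β → ∀ t : ℝ, (0 < t ∧ FF 2 α β t = 0) ↔ t = (α + β) / 2)
      ∧ (α + β ≤ 0 → ¬ ∃ t : ℝ, 0 < t ∧ FF 2 α β t = 0))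
    ∧ (3 ≤ n →
      ((α ≤ 0 ∧ β ≤ 0 → ¬ ∃ t : ℝ, 0 < t ∧ FF n α β t = 0)
      ∧ (0 < β → ∃! t : ℝ, 0 < t ∧ FF n α β t = 0)
      ∧ (0 < α ∧ β = 0 →
          ∀ t : ℝ, (0 < t ∧ FF n α β t = 0) ↔ t = α * n / ((n : ℝ) + 2)))) := by
  constructor
  · -- n = 2
    intro hn
    have h2 : ∀ t : ℝ, FF 2 α β t = 2 * t ^ (1:ℝ) - α - β := by
      intro t
      unfold FF
      norm_num
    have h2' : ∀ t : ℝ, 0 < t → FF 2 α β t = 2 * t - α - β := by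
      intro t ht; rw [h2, Real.rpow_one]
    constructor
    · intro hab t
      constructor
      · rintro ⟨ht, hF⟩
        rw [h2' t ht] at hF; linarith
      · rintro rfl
        have ht : 0 < (α + β) / 2 := by linarith
        exact ⟨ht, by rw [h2' _ ht]; ring⟩
    · rintro hab ⟨t, ht, hF⟩
      rw [h2' t ht] at hF; linarith
  · -- n ≥ 3
    intro hn
    have hn3 : (3:ℝ) ≤ (n : ℝ) := by exact_mod_cast hn
    set m : ℝ := (n : ℝ) / 2 with hmdef
    have hm1 : 0 < m - 1 := by simp only [hmdef]; linarith
    have hmp : 0 < m := by linarith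
    have key : ∀ t : ℝ, 0 < t →
        FF n α β t = t ^ (m - 1) * ((m + 1) * t - α * m) - β := fun t ht =>
      FF_factor n α β t ht
    refine ⟨?_, ?_, ?_⟩
    · -- α ≤ 0, β ≤ 0 : no zeros
      rintro ⟨hα, hβ⟩ ⟨t, ht, hF⟩
      rw [key t ht] at hF
      have hp : 0 < t ^ (m - 1) := Real.rpow_pos_of_pos ht _
      have hh : 0 < (m + 1) * t - α * m := by nlinarith
      nlinarith [mul_pos hp hh]
    · -- β > 0 : exactly one zero
      intro hβ
      -- uniqueness helper
      have mono : ∀ s t : ℝ, 0 < s → s < t →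
          FF n α β s = 0 → FF n α β t = 0 → False := by
        intro s t hs hst hFs hFt
        have ht : 0 < t := hs.trans hst
        rw [key s hs] at hFs
        rw [key t ht] at hFt
        have hps : 0 < s ^ (m - 1) := Real.rpow_pos_of_pos hs _
        have hpt : 0 < t ^ (m - 1) := Real.rpow_pos_of_pos ht _
        have hplt : s ^ (m - 1) < t ^ (m - 1) :=
          Real.rpow_lt_rpow hs.le hst hm1
        have hhs : 0 < (m + 1) * s - α * m := by
          by_contra h
          push_neg at h
          nlinarith [mul_nonpos_of_nonneg_of_nonpos hps.le h]
        have hht : (m + 1) * s - α * m < (m + 1) * t - α * m := by nlinarith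
        nlinarith [mul_lt_mul hplt hht.le hhs hpt.le, mul_lt_mul_of_pos_left hht hps]
      -- existence via IVT
      set Φ : ℝ → ℝ := fun t => t ^ (m - 1) * ((m + 1) * t - α * m) - β with hΦdef
      have hΦcont : Continuous Φ := by
        apply Continuous.sub _ continuous_const
        exact (Real.continuous_rpow_const hm1.le).mul (by continuity)
      set T : ℝ := max 1 ((α * m + β) / (m + 1)) + 1 with hTdef
      have hT1 : 1 ≤ T := by
        have := le_max_left 1 ((α * m + β) / (m + 1))
        simp only [hTdef]; linarith
      have hTh : β < (m + 1) * T - α * m := by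
        have h1 : (α * m + β) / (m + 1) ≤ T - 1 := by
          have := le_max_right 1 ((α * m + β) / (m + 1))
          simp only [hTdef]; linarith
        have h2 : α * m + β ≤ (m + 1) * (T - 1) := by
          rw [div_le_iff₀ (by linarith : (0:ℝ) < m + 1)] at h1
          linarith
        nlinarith
      have hΦ0 : Φ 0 = -β := by
        simp only [hΦdef]
        rw [Real.zero_rpow hm1.ne']
        ring
      have hΦT : 0 < Φ T := by
        have hpT : (1:ℝ) ≤ T ^ (m - 1) := by
          calc (1:ℝ) = 1 ^ (m - 1) := (Real.one_rpow _).symm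
            _ ≤ T ^ (m - 1) := Real.rpow_le_rpow zero_le_one hT1 hm1.le
        simp only [hΦdef]
        nlinarith
      have hivt : (0:ℝ) ∈ Set.Icc (Φ 0) (Φ T) := by
        rw [hΦ0]; constructor <;> [linarith; linarith]
      obtain ⟨t0, ht0mem, ht0⟩ :=
        intermediate_value_Icc (by linarith : (0:ℝ) ≤ T) hΦcont.continuousOn hivt
      have ht0pos : 0 < t0 := by
        rcases lt_or_eq_of_le ht0mem.1 with h | h
        · exact h
        · exfalso; rw [← h] at ht0; rw [hΦ0] at ht0; linarith
      have hFt0 : FF n α β t0 = 0 := by rw [key t0 ht0pos]; exact ht0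
      refine ⟨t0, ⟨ht0pos, hFt0⟩, ?_⟩
      rintro y ⟨hy, hFy⟩
      by_contra hne
      rcases lt_or_gt_of_ne hne with h | h
      · exact mono y t0 hy h hFy hFt0
      · exact mono t0 y ht0pos h hFt0 hFy
    · -- α > 0, β = 0
      rintro ⟨hα, hβ⟩ t
      subst hβ
      have ht0eq : α * (n : ℝ) / ((n : ℝ) + 2) = α * m / (m + 1) := by
        simp only [hmdef]
        rw [div_eq_div_iff (by linarith) (by linarith)]
        ring
      have hm1p : (0:ℝ) < m + 1 := by linarith
      constructor
      · rintro ⟨ht, hF⟩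
        rw [key t ht] at hF
        have hp : 0 < t ^ (m - 1) := Real.rpow_pos_of_pos ht _
        have : (m + 1) * t - α * m = 0 := by
          rcases mul_eq_zero.mp (by linarith : t ^ (m - 1) * ((m + 1) * t - α * m) = 0) with h | h
          · exact absurd h hp.ne'
          · exact h
        rw [ht0eq]
        field_simp
        linarith
      · rintro rfl
        rw [ht0eq]
        have ht : 0 < α * m / (m + 1) := by positivity
        refine ⟨ht, ?_⟩
        rw [key _ ht]
        have : (m + 1) * (α * m / (m + 1)) - α * m = 0 := by
          field_simp
          ring
        rw [this]
        ring
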